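/- arXiv:2112.08580 — 2 statements merged into one kernel-verified Lean document; each statement's English description precedes it below -/
import Mathlib

section
/- Suppose in addition that b : I × Ω → ℝ³ is smooth and satisfies the Lagrangian induction equation ∂_t b + b div_A v = (b·∇_A)v on I × Ω (componentwise: ∂_t b_i + b_i Σ_{k,j} A_{kj} ∂_j v_k = Σ_{k,j} b_k A_{kj} ∂_j v_i). Then the normal magnetic component is conserved in time: ∂_t ( b · N ) = 0 at every point of I × Ω, where N = ∂₁η × ∂₂η. -/
noncomputable section

open Matrix Set

/-- Points of ℝ³ as functions `Fin 3 → ℝ`. -/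
abbrev V3 : Type := Fin 3 → ℝ

/-- Space-time points `(t, x) ∈ ℝ × ℝ³`. -/
abbrev Pt : Type := ℝ × V3

/-- Time derivative `∂ₜ F` of a scalar function on space-time. -/
def dt (F : Pt → ℝ) (z : Pt) : ℝ := fderiv ℝ F z (1, 0)

/-- Spatial partial derivative `∂ⱼ F` of a scalar function on space-time. -/
def dx (j : Fin 3) (F : Pt → ℝ) (z : Pt) : ℝ := fderiv ℝ F z (0, Pi.single j 1)

/-- The spatial Jacobian matrix `(∇η)_{ij} = ∂ηᵢ/∂xⱼ`. -/
def jac (η : Pt → V3) (z : Pt) : Matrix (Fin 3) (Fin 3) ℝ :=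
  Matrix.of fun i j => dx j (fun w => η w i) z

/-- The Jacobian determinant `J = det ∇η`. -/
def Jdet (η : Pt → V3) (z : Pt) : ℝ := (jac η z).det

/-- The matrix `A = (∇η)⁻ᵀ`. -/
def Amat (η : Pt → V3) (z : Pt) : Matrix (Fin 3) (Fin 3) ℝ := ((jac η z)⁻¹)ᵀ

/-- The Lagrangian velocity `v = ∂ₜ η`. -/
def vel (η : Pt → V3) (z : Pt) : V3 := fun i => dt (fun w => η w i) z

/-- `div_A w = Σᵢⱼ Aᵢⱼ ∂ⱼ wᵢ`. -/
def divA (η : Pt → V3) (w : Pt → V3) (z : Pt) : ℝ :=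
  ∑ i, ∑ j, Amat η z i j * dx j (fun y => w y i) z

/-- `(w·∇_A) f = Σₖⱼ wₖ Aₖⱼ ∂ⱼ f`. -/
def advA (η : Pt → V3) (w : Pt → V3) (f : Pt → ℝ) (z : Pt) : ℝ :=
  ∑ k, ∑ j, w z k * Amat η z k j * dx j f z

/-- `N = ∂₁η × ∂₂η`, the cross product of the first two columns of `∇η`. -/
def Nvec (η : Pt → V3) (z : Pt) : V3 :=
  crossProduct (fun i => jac η z i 0) (fun i => jac η z i 1)

/-! ### Auxiliary lemmas -/

lemma dt_mul {f g : Pt → ℝ} {z : Pt} (hf : DifferentiableAt ℝ f z)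
    (hg : DifferentiableAt ℝ g z) :
    dt (fun w => f w * g w) z = dt f z * g z + f z * dt g z := by
  simp [dt, fderiv_fun_mul hf hg]; ring

lemma dt_add {f g : Pt → ℝ} {z : Pt} (hf : DifferentiableAt ℝ f z)
    (hg : DifferentiableAt ℝ g z) :
    dt (fun w => f w + g w) z = dt f z + dt g z := by
  simp [dt, fderiv_fun_add hf hg]

lemma dt_sub {f g : Pt → ℝ} {z : Pt} (hf : DifferentiableAt ℝ f z)
    (hg : DifferentiableAt ℝ g z) :
    dt (fun w => f w - g w) z = dt f z - dt g z := by
  simp [dt, fderiv_fun_sub hf hg]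

lemma diffAt_dx {f : Pt → ℝ} {U : Set Pt} (hU : IsOpen U) (hf : ContDiffOn ℝ (⊤ : ℕ∞) f U)
    {z : Pt} (hz : z ∈ U) (j : Fin 3) :
    DifferentiableAt ℝ (fun w => dx j f w) z := by
  have h1 : ContDiffOn ℝ 1 (fderiv ℝ f) U := hf.fderiv_of_isOpen hU (WithTop.coe_le_coe.mpr le_top)
  have h2 : ContDiffOn ℝ 1 (fun w => fderiv ℝ f w ((0, Pi.single j 1) : Pt)) U :=
    h1.clm_apply contDiffOn_const
  exact ((h2.differentiableOn one_ne_zero).differentiableAt (hU.mem_nhds hz))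

lemma dt_dx_comm {f : Pt → ℝ} {U : Set Pt} (hU : IsOpen U) (hf : ContDiffOn ℝ (⊤ : ℕ∞) f U)
    {z : Pt} (hz : z ∈ U) (j : Fin 3) :
    dt (fun w => dx j f w) z = dx j (fun w => dt f w) z := by
  have hfa : ContDiffAt ℝ (⊤ : ℕ∞) f z := hf.contDiffAt (hU.mem_nhds hz)
  have hsymm := hfa.isSymmSndFDerivAt (by simp only [minSmoothness_of_isRCLikeNormedField]; exact WithTop.coe_le_coe.mpr le_top)
  have hdf : DifferentiableAt ℝ (fderiv ℝ f) z :=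
    (((hf.fderiv_of_isOpen hU (WithTop.coe_le_coe.mpr le_top) : ContDiffOn ℝ 1 _ U).differentiableOn one_ne_zero).differentiableAt
      (hU.mem_nhds hz))
  have key : ∀ u v : Pt, fderiv ℝ (fun w => fderiv ℝ f w u) z v
      = fderiv ℝ (fderiv ℝ f) z v u := by
    intro u v
    rw [fderiv_clm_apply hdf (differentiableAt_const u)]
    simp
  simp only [dt, dx]
  rw [key, key, hsymm]

lemma dt_triple {f p q r s : Pt → ℝ} {z : Pt}
    (hf : DifferentiableAt ℝ f z) (hp : DifferentiableAt ℝ p z)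
    (hq : DifferentiableAt ℝ q z) (hr : DifferentiableAt ℝ r z)
    (hs : DifferentiableAt ℝ s z) :
    dt (fun w => f w * (p w * q w - r w * s w)) z
      = dt f z * (p z * q z - r z * s z)
        + f z * (dt p z * q z + p z * dt q z - (dt r z * s z + r z * dt s z)) := by
  rw [dt_mul (g := fun w => p w * q w - r w * s w) hf ((hp.mul hq).sub (hr.mul hs)),
    dt_sub (f := fun w => p w * q w) (g := fun w => r w * s w) (hp.mul hq) (hr.mul hs),
    dt_mul hp hq, dt_mul hr hs]

set_option maxHeartbeats 1000000 in
lemma key_alg (M G : Matrix (Fin 3) (Fin 3) ℝ) (c : Fin 3 → ℝ) (hdet : M.det ≠ 0) :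
    ((∑ k, ∑ j, c k * (M⁻¹)ᵀ k j * G 0 j) - c 0 * (∑ k, ∑ j, (M⁻¹)ᵀ k j * G k j))
        * (M 1 0 * M 2 1 - M 2 0 * M 1 1)
  + ((∑ k, ∑ j, c k * (M⁻¹)ᵀ k j * G 1 j) - c 1 * (∑ k, ∑ j, (M⁻¹)ᵀ k j * G k j))
        * (M 2 0 * M 0 1 - M 0 0 * M 2 1)
  + ((∑ k, ∑ j, c k * (M⁻¹)ᵀ k j * G 2 j) - c 2 * (∑ k, ∑ j, (M⁻¹)ᵀ k j * G k j))
        * (M 0 0 * M 1 1 - M 1 0 * M 0 1)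
  + c 0 * (G 1 0 * M 2 1 + M 1 0 * G 2 1 - (G 2 0 * M 1 1 + M 2 0 * G 1 1))
  + c 1 * (G 2 0 * M 0 1 + M 2 0 * G 0 1 - (G 0 0 * M 2 1 + M 0 0 * G 2 1))
  + c 2 * (G 0 0 * M 1 1 + M 0 0 * G 1 1 - (G 1 0 * M 0 1 + M 1 0 * G 0 1)) = 0 := by
  have hu : M.det * (M.det)⁻¹ = 1 := mul_inv_cancel₀ hdet
  rw [Matrix.inv_def, Ring.inverse_eq_inv']
  set u := (M.det)⁻¹ with hu'
  simp only [Matrix.transpose_apply, Matrix.smul_apply, smul_eq_mul,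
    Matrix.adjugate_fin_three, Fin.sum_univ_three, Matrix.cons_val', Matrix.cons_val_zero,
    Matrix.cons_val_one, Matrix.head_cons, Matrix.empty_val', Matrix.cons_val_fin_one,
    Matrix.head_fin_const, Matrix.cons_val_two, Matrix.tail_cons, Matrix.of_apply]
  rw [Matrix.det_fin_three] at hu
  linear_combination (-(c 0 * (G 1 0 * M 2 1 + M 1 0 * G 2 1 - (G 2 0 * M 1 1 + M 2 0 * G 1 1))
   + c 1 * (G 2 0 * M 0 1 + M 2 0 * G 0 1 - (G 0 0 * M 2 1 + M 0 0 * G 2 1))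
   + c 2 * (G 0 0 * M 1 1 + M 0 0 * G 1 1 - (G 1 0 * M 0 1 + M 1 0 * G 0 1)))) * hu

/-- If `b` satisfies the Lagrangian induction equation
`∂ₜ b + b div_A v = (b·∇_A) v`, then the normal magnetic component is conserved in time:
`∂ₜ (b · N) = 0` at every point of `I × Ω`, where `N = ∂₁η × ∂₂η`. -/
theorem normal_magnetic_component_conservation
    (I : Set ℝ) (Ω : Set V3) (hI : IsOpen I) (hIc : I.OrdConnected) (hΩ : IsOpen Ω)
    (η : Pt → V3) (hη : ContDiffOn ℝ (⊤ : ℕ∞) η (I ×ˢ Ω))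
    (hinv : ∀ z ∈ I ×ˢ Ω, IsUnit (jac η z).det)
    (b : Pt → V3) (hb : ContDiffOn ℝ (⊤ : ℕ∞) b (I ×ˢ Ω))
    (hind : ∀ z ∈ I ×ˢ Ω, ∀ i : Fin 3,
      dt (fun w => b w i) z + b z i * (∑ k, ∑ j, Amat η z k j * dx j (fun w => vel η w k) z)
        = ∑ k, ∑ j, b z k * Amat η z k j * dx j (fun w => vel η w i) z) :
    ∀ z ∈ I ×ˢ Ω, dt (fun w => b w ⬝ᵥ Nvec η w) z = 0 := by
  intro z hz
  have hU : IsOpen (I ×ˢ Ω) := hI.prod hΩ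
  have hbC : ∀ i, ContDiffOn ℝ (⊤ : ℕ∞) (fun w => b w i) (I ×ˢ Ω) := fun i => contDiffOn_pi.mp hb i
  have hηC : ∀ i, ContDiffOn ℝ (⊤ : ℕ∞) (fun w => η w i) (I ×ˢ Ω) := fun i => contDiffOn_pi.mp hη i
  have hbD : ∀ i, DifferentiableAt ℝ (fun w => b w i) z := fun i =>
    ((hbC i).differentiableOn (by simp)).differentiableAt (hU.mem_nhds hz)
  have hPD : ∀ i j, DifferentiableAt ℝ (fun w => dx j (fun y => η y i) w) z := fun i j =>
    diffAt_dx hU (hηC i) hz j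
  have hrw : (fun w => b w ⬝ᵥ Nvec η w) = fun w =>
      b w 0 * (dx 0 (fun y => η y 1) w * dx 1 (fun y => η y 2) w
        - dx 0 (fun y => η y 2) w * dx 1 (fun y => η y 1) w)
    + b w 1 * (dx 0 (fun y => η y 2) w * dx 1 (fun y => η y 0) w
        - dx 0 (fun y => η y 0) w * dx 1 (fun y => η y 2) w)
    + b w 2 * (dx 0 (fun y => η y 0) w * dx 1 (fun y => η y 1) w
        - dx 0 (fun y => η y 1) w * dx 1 (fun y => η y 0) w) := by
    funext w
    simp [Nvec, cross_apply, dotProduct, Fin.sum_univ_three, jac]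
  rw [hrw]
  rw [dt_add (f := fun w => b w 0 * (dx 0 (fun y => η y 1) w * dx 1 (fun y => η y 2) w - dx 0 (fun y => η y 2) w * dx 1 (fun y => η y 1) w) + b w 1 * (dx 0 (fun y => η y 2) w * dx 1 (fun y => η y 0) w - dx 0 (fun y => η y 0) w * dx 1 (fun y => η y 2) w))
        (g := fun w => b w 2 * (dx 0 (fun y => η y 0) w * dx 1 (fun y => η y 1) w - dx 0 (fun y => η y 1) w * dx 1 (fun y => η y 0) w)) (((hbD 0).mul (((hPD 1 0).mul (hPD 2 1)).sub ((hPD 2 0).mul (hPD 1 1)))).add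
        ((hbD 1).mul (((hPD 2 0).mul (hPD 0 1)).sub ((hPD 0 0).mul (hPD 2 1)))))
      ((hbD 2).mul (((hPD 0 0).mul (hPD 1 1)).sub ((hPD 1 0).mul (hPD 0 1)))),
    dt_add (f := fun w => b w 0 * (dx 0 (fun y => η y 1) w * dx 1 (fun y => η y 2) w - dx 0 (fun y => η y 2) w * dx 1 (fun y => η y 1) w)) (g := fun w => b w 1 * (dx 0 (fun y => η y 2) w * dx 1 (fun y => η y 0) w - dx 0 (fun y => η y 0) w * dx 1 (fun y => η y 2) w))
        ((hbD 0).mul (((hPD 1 0).mul (hPD 2 1)).sub ((hPD 2 0).mul (hPD 1 1))))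
      ((hbD 1).mul (((hPD 2 0).mul (hPD 0 1)).sub ((hPD 0 0).mul (hPD 2 1)))),
    dt_triple (hbD 0) (hPD 1 0) (hPD 2 1) (hPD 2 0) (hPD 1 1),
    dt_triple (hbD 1) (hPD 2 0) (hPD 0 1) (hPD 0 0) (hPD 2 1),
    dt_triple (hbD 2) (hPD 0 0) (hPD 1 1) (hPD 1 0) (hPD 0 1)]
  have hcomm : ∀ i j : Fin 3, dt (fun w => dx j (fun y => η y i) w) z
      = dx j (fun w => vel η w i) z := fun i j => dt_dx_comm hU (hηC i) hz j
  simp only [hcomm]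
  have hdtb : ∀ i : Fin 3, dt (fun w => b w i) z
      = (∑ k, ∑ j, b z k * Amat η z k j * dx j (fun w => vel η w i) z)
        - b z i * (∑ k, ∑ j, Amat η z k j * dx j (fun w => vel η w k) z) :=
    fun i => eq_sub_of_add_eq (hind z hz i)
  simp only [hdtb]
  have hdet : (jac η z).det ≠ 0 := (hinv z hz).ne_zero
  have hkey := key_alg (jac η z)
    (Matrix.of fun i j => dx j (fun w => vel η w i) z) (b z) hdet
  simp only [jac, Matrix.of_apply] at hkey ⊢
  simp only [Amat, jac]
  linear_combination hkey
end
end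

section
/- Fix t₀ ∈ I. Then for every (t,x) ∈ I × Ω one has A(t,x)ᵀ b(t,x) = ( p(t,x)/p(t₀,x) )^{1/γ} A(t₀,x)ᵀ b(t₀,x); consequently, for every differentiable function f : I × Ω → ℝ, the transversal derivative transfers to time t₀: ( (b·∇_A) f )(t,x) = ( p(t,x)/p(t₀,x) )^{1/γ} Σ_{k,j} b_k(t₀,x) A_{kj}(t₀,x) ∂_j f(t,x). -/
noncomputable section

open Matrix Set

/- ### Auxiliary lemmas -/

lemma hasDerivAt_slice {F : Pt → ℝ} {t : ℝ} {x : V3} (hF : DifferentiableAt ℝ F (t, x)) :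
    HasDerivAt (fun s => F (s, x)) (dt F (t, x)) t := by
  have hψ : HasDerivAt (fun s : ℝ => ((s, x) : Pt)) ((1:ℝ), (0:V3)) t :=
    (hasDerivAt_id t).prodMk (hasDerivAt_const t x)
  simpa [dt, Function.comp_def] using hF.hasFDerivAt.comp_hasDerivAt t hψ

lemma hasDerivAt_dx_slice {F : Pt → ℝ} {t : ℝ} {x : V3} (hF : ContDiffAt ℝ (⊤ : ℕ∞) F (t, x))
    (j : Fin 3) :
    HasDerivAt (fun s => dx j F (s, x)) (dx j (fun w => dt F w) (t, x)) t := by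
  have hΦd : DifferentiableAt ℝ (fderiv ℝ F) (t, x) :=
    (hF.fderiv_right (m := (⊤ : ℕ∞)) (by simp)).differentiableAt (by simp)
  have hG : HasFDerivAt (fun w => fderiv ℝ F w ((0:ℝ), Pi.single j (1:ℝ)))
      ((fderiv ℝ (fderiv ℝ F) (t, x)).flip ((0:ℝ), Pi.single j (1:ℝ))) (t, x) := by
    simpa using hΦd.hasFDerivAt.clm_apply (hasFDerivAt_const ((0:ℝ), Pi.single j (1:ℝ)) (t, x))
  have hψ : HasDerivAt (fun s : ℝ => ((s, x) : Pt)) ((1:ℝ), (0:V3)) t :=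
    (hasDerivAt_id t).prodMk (hasDerivAt_const t x)
  have hmain : HasDerivAt (fun s => dx j F (s, x))
      (fderiv ℝ (fderiv ℝ F) (t, x) ((1:ℝ), (0:V3)) ((0:ℝ), Pi.single j 1)) t := by
    simpa [dx, Function.comp_def] using hG.comp_hasDerivAt t hψ
  have hdt : dx j (fun w => dt F w) (t, x)
      = fderiv ℝ (fderiv ℝ F) (t, x) ((0:ℝ), Pi.single j 1) ((1:ℝ), (0:V3)) := by
    have h1 : (fun w => dt F w) = fun w => fderiv ℝ F w ((1:ℝ), (0:V3)) := rfl
    rw [dx, h1, fderiv_clm_apply hΦd (differentiableAt_const _)]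
    simp
  rw [hdt, (hF.isSymmSndFDerivAt (by rw [minSmoothness_of_isRCLikeNormedField]; exact WithTop.coe_le_coe.mpr le_top)) ((0:ℝ), Pi.single j 1) ((1:ℝ), (0:V3))]
  exact hmain

lemma differentiableAt_det3 {M : ℝ → Matrix (Fin 3) (Fin 3) ℝ} {t : ℝ}
    (h : ∀ i j, DifferentiableAt ℝ (fun s => M s i j) t) :
    DifferentiableAt ℝ (fun s => (M s).det) t := by
  simp only [Matrix.det_fin_three]
  exact (((((((h 0 0).mul (h 1 1)).mul (h 2 2)).sub (((h 0 0).mul (h 1 2)).mul (h 2 1))).sub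
    (((h 0 1).mul (h 1 0)).mul (h 2 2))).add (((h 0 1).mul (h 1 2)).mul (h 2 0))).add
    (((h 0 2).mul (h 1 0)).mul (h 2 1))).sub (((h 0 2).mul (h 1 1)).mul (h 2 0))

lemma differentiableAt_adjugate3 {M : ℝ → Matrix (Fin 3) (Fin 3) ℝ} {t : ℝ}
    (h : ∀ i j, DifferentiableAt ℝ (fun s => M s i j) t) (i j : Fin 3) :
    DifferentiableAt ℝ (fun s => (M s).adjugate i j) t := by
  simp only [Matrix.adjugate_apply]
  refine differentiableAt_det3 (fun a b => ?_)
  by_cases hab : a = j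
  · simp [Matrix.updateRow_apply, hab]
  · simpa [Matrix.updateRow_apply, hab] using h a b

lemma differentiableAt_inv_entry {M : ℝ → Matrix (Fin 3) (Fin 3) ℝ} {t : ℝ}
    (h : ∀ i j, DifferentiableAt ℝ (fun s => M s i j) t) (hdet : (M t).det ≠ 0) (i j : Fin 3) :
    DifferentiableAt ℝ (fun s => (M s)⁻¹ i j) t := by
  simp only [Matrix.inv_def, Matrix.smul_apply, Ring.inverse_eq_inv', smul_eq_mul]
  exact ((differentiableAt_det3 h).inv hdet).mul (differentiableAt_adjugate3 h i j)

/-- Core lemma: for fixed `x ∈ Ω`, the ratio `((∇η)⁻¹ b)ₖ / p^{1/γ}` is constant in time. -/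
lemma key_ratio
    (I : Set ℝ) (Ω : Set V3) (hI : IsOpen I) (hIc : I.OrdConnected) (hΩ : IsOpen Ω)
    (η : Pt → V3) (hη : ContDiffOn ℝ (⊤ : ℕ∞) η (I ×ˢ Ω))
    (hinv : ∀ z ∈ I ×ˢ Ω, IsUnit (jac η z).det)
    (γ : ℝ) (hγ : γ ≠ 0)
    (p : Pt → ℝ) (hp : ContDiffOn ℝ (⊤ : ℕ∞) p (I ×ˢ Ω))
    (hppos : ∀ z ∈ I ×ˢ Ω, 0 < p z)
    (hpeq : ∀ z ∈ I ×ˢ Ω, dt p z + γ * p z * divA η (vel η) z = 0)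
    (b : Pt → V3) (hb : ContDiffOn ℝ (⊤ : ℕ∞) b (I ×ˢ Ω))
    (hind : ∀ z ∈ I ×ˢ Ω, ∀ i : Fin 3,
      dt (fun w => b w i) z + b z i * divA η (vel η) z
        = ∑ k, ∑ j, b z k * Amat η z k j * dx j (fun w => vel η w i) z)
    (t₀ : ℝ) (ht₀ : t₀ ∈ I) (x : V3) (hx : x ∈ Ω) :
    ∀ t ∈ I, ∀ k : Fin 3, ((jac η (t, x))⁻¹ *ᵥ b (t, x)) k
      = ((p (t, x) / p (t₀, x)) ^ (1 / γ)) * ((jac η (t₀, x))⁻¹ *ᵥ b (t₀, x)) k := by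
  have hU : IsOpen (I ×ˢ Ω) := hI.prod hΩ
  have memU : ∀ s ∈ I, ((s, x) : Pt) ∈ I ×ˢ Ω := fun s hs => ⟨hs, hx⟩
  set u : ℝ → V3 := fun s => (jac η (s, x))⁻¹ *ᵥ b (s, x) with hu_def
  set g : ℝ → ℝ := fun s => divA η (vel η) (s, x) with hg_def
  set q : ℝ → ℝ := fun s => p (s, x) ^ (1 / γ) with hq_def
  -- basic pointwise facts
  have hdet : ∀ s ∈ I, (jac η (s, x)).det ≠ 0 := fun s hs => (hinv _ (memU s hs)).ne_zero
  have hppos' : ∀ s ∈ I, 0 < p (s, x) := fun s hs => hppos _ (memU s hs)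
  have hqpos : ∀ s ∈ I, 0 < q s := fun s hs => Real.rpow_pos_of_pos (hppos' s hs) _
  -- derivatives of jacobian entries
  have hmder : ∀ s ∈ I, ∀ i j : Fin 3, HasDerivAt (fun s' => jac η (s', x) i j)
      (dx j (fun w => vel η w i) (s, x)) s := by
    intro s hs i j
    have hηi : ContDiffAt ℝ (⊤ : ℕ∞) (fun w => η w i) (s, x) :=
      ((contDiffOn_pi.mp hη i).contDiffAt (hU.mem_nhds (memU s hs)))
    exact hasDerivAt_dx_slice hηi j
  -- derivatives of b entries
  have hbder : ∀ s ∈ I, ∀ i : Fin 3, HasDerivAt (fun s' => b (s', x) i)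
      (dt (fun w => b w i) (s, x)) s := by
    intro s hs i
    exact hasDerivAt_slice (((contDiffOn_pi.mp hb i).contDiffAt
      (hU.mem_nhds (memU s hs))).differentiableAt (by simp))
  -- differentiability of u components
  have hudiff : ∀ s ∈ I, ∀ k : Fin 3, DifferentiableAt ℝ (fun s' => u s' k) s := by
    intro s hs k
    have : (fun s' => u s' k) = fun s' => ∑ j, (jac η (s', x))⁻¹ k j * b (s', x) j := by
      funext s'; simp [hu_def, Matrix.mulVec, dotProduct]
    rw [this]
    refine DifferentiableAt.fun_sum (fun j _ => DifferentiableAt.mul ?_ ?_)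
    · exact differentiableAt_inv_entry
        (fun i j => (hmder s hs i j).differentiableAt) (hdet s hs) k j
    · exact (hbder s hs j).differentiableAt
  -- the ODE for u : u' = -g • u
  have huder : ∀ s ∈ I, ∀ k : Fin 3,
      HasDerivAt (fun s' => u s' k) (-(g s) * u s k) s := by
    intro s hs k
    have hudiff' := hudiff s hs
    set u' : V3 := fun k => deriv (fun s' => u s' k) s with hu'_def
    -- the relation m *ᵥ u = b  on I
    have hmu : ∀ s' ∈ I, ∀ i : Fin 3, (∑ k, jac η (s', x) i k * u s' k) = b (s', x) i := by
      intro s' hs' i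
      have h1 : jac η (s', x) *ᵥ u s' = b (s', x) := by
        rw [hu_def]
        simp only [Matrix.mulVec_mulVec]
        rw [Matrix.mul_nonsing_inv _ (hinv _ (memU s' hs')), Matrix.one_mulVec]
      calc (∑ k, jac η (s', x) i k * u s' k) = (jac η (s', x) *ᵥ u s') i := by
            simp [Matrix.mulVec, dotProduct]
        _ = b (s', x) i := by rw [h1]
    -- differentiate the relation
    have hrel : ∀ i : Fin 3, (∑ k, (dx k (fun w => vel η w i) (s, x) * u s k
        + jac η (s, x) i k * u' k)) = dt (fun w => b w i) (s, x) := by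
      intro i
      have hL : HasDerivAt (fun s' => ∑ k, jac η (s', x) i k * u s' k)
          (∑ k, (dx k (fun w => vel η w i) (s, x) * u s k + jac η (s, x) i k * u' k)) s := by
        refine HasDerivAt.fun_sum (fun k _ => ?_)
        exact (hmder s hs i k).mul (hudiff s hs k).hasDerivAt
      have heq : (fun s' => b (s', x) i) =ᶠ[nhds s] (fun s' => ∑ k, jac η (s', x) i k * u s' k) :=
        Filter.eventually_of_mem (hI.mem_nhds hs) (fun s' hs' => (hmu s' hs' i).symm)
      exact (hL.congr_of_eventuallyEq heq).unique (hbder s hs i)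
    -- use the induction equation to compute  m *ᵥ u' = -(g s) • b(s,x)
    have hmv : jac η (s, x) *ᵥ u' = (-(g s)) • b (s, x) := by
      funext i
      have h2 := hind _ (memU s hs) i
      have h3 : (∑ k, ∑ j, b (s, x) k * Amat η (s, x) k j * dx j (fun w => vel η w i) (s, x))
          = ∑ j, dx j (fun w => vel η w i) (s, x) * u s j := by
        rw [Finset.sum_comm]
        refine Finset.sum_congr rfl fun j _ => ?_
        have husj : u s j = ∑ k, (jac η (s, x))⁻¹ j k * b (s, x) k := by
          simp [hu_def, Matrix.mulVec, dotProduct]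
        rw [husj, Finset.mul_sum]
        refine Finset.sum_congr rfl fun k _ => ?_
        simp only [Amat, Matrix.transpose_apply]
        ring
      have h4 : (∑ k, jac η (s, x) i k * u' k)
          = dt (fun w => b w i) (s, x) - ∑ k, dx k (fun w => vel η w i) (s, x) * u s k := by
        have := hrel i
        rw [Finset.sum_add_distrib] at this
        linarith
      have h5 : dt (fun w => b w i) (s, x)
          = (∑ j, dx j (fun w => vel η w i) (s, x) * u s j) - b (s, x) i * g s := by
        rw [← h3]; linarith [h2]
      calc (jac η (s, x) *ᵥ u') i = ∑ k, jac η (s, x) i k * u' k := by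
            simp [Matrix.mulVec, dotProduct]
        _ = -(g s) * b (s, x) i := by rw [h4, h5]; ring
        _ = ((-(g s)) • b (s, x)) i := by simp
    -- solve for u'
    have hu' : u' = (-(g s)) • u s := by
      have h6 : (jac η (s, x))⁻¹ *ᵥ (jac η (s, x) *ᵥ u') = u' := by
        simp only [Matrix.mulVec_mulVec]
        rw [Matrix.nonsing_inv_mul _ (hinv _ (memU s hs)), Matrix.one_mulVec]
      rw [← h6, hmv, Matrix.mulVec_smul]
    have := (hudiff s hs k).hasDerivAt
    have h7 : deriv (fun s' => u s' k) s = -(g s) * u s k := by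
      have : u' k = ((-(g s)) • u s) k := by rw [hu']
      simpa [hu'_def] using this
    rwa [h7] at this
  -- the ODE for q : q' = -g * q
  have hqder : ∀ s ∈ I, HasDerivAt q (-(g s) * q s) s := by
    intro s hs
    have hpd : HasDerivAt (fun s' => p (s', x)) (dt p (s, x)) s :=
      hasDerivAt_slice ((hp.contDiffAt (hU.mem_nhds (memU s hs))).differentiableAt (by simp))
    have hrp := (Real.hasDerivAt_rpow_const (x := p (s, x)) (p := 1 / γ)
      (Or.inl (hppos' s hs).ne')).comp s hpd
    have hdtp : dt p (s, x) = -(γ * p (s, x) * g s) := by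
      have := hpeq _ (memU s hs); linarith
    have hcalc : 1 / γ * p (s, x) ^ (1 / γ - 1) * (-(γ * p (s, x) * g s))
        = -(g s) * q s := by
      rw [Real.rpow_sub_one (hppos' s hs).ne', hq_def]
      field_simp [hγ, (hppos' s hs).ne']
    rw [hdtp] at hrp
    have hrp' : HasDerivAt q (1 / γ * p (s, x) ^ (1 / γ - 1) * -(γ * p (s, x) * g s)) s := hrp
    rwa [hcalc] at hrp'
  -- the ratio u k / q is constant on I
  intro t ht k
  have hconst : u t k / q t = u t₀ k / q t₀ := by
    have hconv : Convex ℝ I := convex_iff_ordConnected.mpr hIc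
    have hr : ∀ s ∈ I, HasDerivAt (fun s' => u s' k / q s') 0 s := by
      intro s hs
      have := (huder s hs k).div (hqder s hs) (hqpos s hs).ne'
      refine this.congr_deriv ?_
      rw [div_eq_zero_iff]
      left
      ring
    refine hconv.is_const_of_fderivWithin_eq_zero
      (fun s hs => ((hr s hs).differentiableAt).differentiableWithinAt) (fun s hs => ?_) ht ht₀
    rw [fderivWithin_of_isOpen hI hs]
    refine ContinuousLinearMap.ext_ring ?_
    have hd : deriv (fun s' => u s' k / q s') s = 0 := (hr s hs).deriv
    rw [ContinuousLinearMap.zero_apply, ← hd]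
    rfl
  -- conclude
  have hq0 : q t₀ ≠ 0 := (hqpos t₀ ht₀).ne'
  have hqt : q t ≠ 0 := (hqpos t ht).ne'
  have hratio : q t / q t₀ = (p (t, x) / p (t₀, x)) ^ (1 / γ) := by
    rw [hq_def, Real.div_rpow (hppos' t ht).le (hppos' t₀ ht₀).le]
  have h8 := hconst
  rw [div_eq_div_iff hqt hq0] at h8
  show u t k = ((p (t, x) / p (t₀, x)) ^ (1 / γ)) * u t₀ k
  rw [← hratio]
  field_simp
  linear_combination h8

/-- Under the Lagrangian pressure and induction equations, for a fixed `t₀ ∈ I`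
one has `A(t,x)ᵀ b(t,x) = (p(t,x)/p(t₀,x))^{1/γ} A(t₀,x)ᵀ b(t₀,x)` on `I × Ω`; consequently, for
every differentiable `f`, `((b·∇_A) f)(t,x) = (p(t,x)/p(t₀,x))^{1/γ} Σₖⱼ bₖ(t₀,x) Aₖⱼ(t₀,x) ∂ⱼf(t,x)`. -/
theorem transversal_derivative_transfer
    (I : Set ℝ) (Ω : Set V3) (hI : IsOpen I) (hIc : I.OrdConnected) (hΩ : IsOpen Ω)
    (η : Pt → V3) (hη : ContDiffOn ℝ (⊤ : ℕ∞) η (I ×ˢ Ω))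
    (hinv : ∀ z ∈ I ×ˢ Ω, IsUnit (jac η z).det)
    (γ : ℝ) (hγ : γ ≠ 0)
    (hJpos : ∀ z ∈ I ×ˢ Ω, 0 < Jdet η z)
    (p : Pt → ℝ) (hp : ContDiffOn ℝ (⊤ : ℕ∞) p (I ×ˢ Ω))
    (hppos : ∀ z ∈ I ×ˢ Ω, 0 < p z)
    (hpeq : ∀ z ∈ I ×ˢ Ω, dt p z + γ * p z * divA η (vel η) z = 0)
    (b : Pt → V3) (hb : ContDiffOn ℝ (⊤ : ℕ∞) b (I ×ˢ Ω))
    (hind : ∀ z ∈ I ×ˢ Ω, ∀ i : Fin 3,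
      dt (fun w => b w i) z + b z i * divA η (vel η) z
        = ∑ k, ∑ j, b z k * Amat η z k j * dx j (fun w => vel η w i) z)
    (t₀ : ℝ) (ht₀ : t₀ ∈ I) :
    ∀ t ∈ I, ∀ x ∈ Ω,
      ((Amat η (t, x))ᵀ *ᵥ b (t, x)
          = ((p (t, x) / p (t₀, x)) ^ (1 / γ)) • ((Amat η (t₀, x))ᵀ *ᵥ b (t₀, x))) ∧
      ∀ f : Pt → ℝ, DifferentiableOn ℝ f (I ×ˢ Ω) →
        advA η b f (t, x)
          = (p (t, x) / p (t₀, x)) ^ (1 / γ)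
              * ∑ k, ∑ j, b (t₀, x) k * Amat η (t₀, x) k j * dx j f (t, x) := by
  intro t ht x hx
  have key := key_ratio I Ω hI hIc hΩ η hη hinv γ hγ p hp hppos hpeq b hb hind t₀ ht₀ x hx
  have hAt : (Amat η (t, x))ᵀ = (jac η (t, x))⁻¹ := Matrix.transpose_transpose _
  have hAt₀ : (Amat η (t₀, x))ᵀ = (jac η (t₀, x))⁻¹ := Matrix.transpose_transpose _
  have hswap : ∀ (s : ℝ) (d : Fin 3 → ℝ),
      (∑ k, ∑ j, b (s, x) k * Amat η (s, x) k j * d j)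
        = ∑ j, ((jac η (s, x))⁻¹ *ᵥ b (s, x)) j * d j := by
    intro s d
    rw [Finset.sum_comm]
    refine Finset.sum_congr rfl fun j _ => ?_
    have hj : ((jac η (s, x))⁻¹ *ᵥ b (s, x)) j = ∑ k, (jac η (s, x))⁻¹ j k * b (s, x) k := by
      simp [Matrix.mulVec, dotProduct]
    rw [hj, Finset.sum_mul]
    refine Finset.sum_congr rfl fun k _ => ?_
    simp only [Amat, Matrix.transpose_apply]
    ring
  constructor
  · rw [hAt, hAt₀]
    funext k
    rw [Pi.smul_apply, smul_eq_mul]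
    exact key t ht k
  · intro f _
    rw [advA, hswap t (fun j => dx j f (t, x)), hswap t₀ (fun j => dx j f (t, x)),
      Finset.mul_sum]
    refine Finset.sum_congr rfl fun j _ => ?_
    rw [key t ht j]
    ring
end
end
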